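/- For every positive integer n, the reduced factor complexity of the regular paperfolding sequence satisfies ρ_f^red(8n+1) = 4. -/

import Mathlib

/-- The reduction of a word: replace each maximal run of identical characters
by a single character. -/
def red {α : Type*} [DecidableEq α] (w : List α) : List α :=
  w.destutter (· ≠ ·)

/-- The length-`k` factor of the infinite sequence `x` (1-indexed) starting at
position `i`. -/
def factorAt {α : Type*} (x : ℕ → α) (i k : ℕ) : List α :=
  (List.range k).map (fun j => x (i + j))

/-- The reduced factor complexity: the number of length-`n` factors of `x`,
counted up to reduced-equivalence (`red v = red w`). -/
noncomputable def redFactorComplexity {α : Type*} [DecidableEq α]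
    (x : ℕ → α) (n : ℕ) : ℕ :=
  Set.ncard { u : List α | ∃ i ≥ 1, u = red (factorAt x i n) }

/-- The Thue–Morse sequence (1-indexed): `t n` is the parity of the number of
1's in the binary expansion of `n - 1`. -/
def thueMorse (n : ℕ) : Bool :=
  decide ((Nat.digits 2 (n - 1)).sum % 2 = 1)

/-- The number of alternations (occurrences of 01 or 10) in a binary word. -/
def alt (w : List Bool) : ℕ :=
  (List.zipWith (fun a b => a != b) w w.tail).count true

/-- The minimum number of alternations among length-`k` factors of Thue–Morse. -/
noncomputable def tmAltMin (k : ℕ) : ℕ :=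
  sInf { a : ℕ | ∃ i ≥ 1, a = alt (factorAt thueMorse i k) }

/-- The maximum number of alternations among length-`k` factors of Thue–Morse. -/
noncomputable def tmAltMax (k : ℕ) : ℕ :=
  sSup { a : ℕ | ∃ i ≥ 1, a = alt (factorAt thueMorse i k) }

/-- The Thue–Morse morphism `0 → 01`, `1 → 10`. -/
def mu (w : List Bool) : List Bool :=
  w.flatMap (fun b => if b then [true, false] else [false, true])

/-- The regular paperfolding sequence (1-indexed): writing `n = n' * 2^k` with
`n'` odd, `f n = 1` iff `n' ≡ 3 (mod 4)`. -/
def paperfold (n : ℕ) : Bool :=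
  decide ((n / 2 ^ (n.factorization 2)) % 4 = 3)

/-- The reduced abelian complexity: the number of length-`n` factors of `x`,
counted up to the equivalence identifying `v` and `w` whenever `red v` is a
rearrangement of the characters of `red w`. -/
noncomputable def redAbelianComplexity {α : Type*} [DecidableEq α]
    (x : ℕ → α) (n : ℕ) : ℕ :=
  Set.ncard { m : Multiset α | ∃ i ≥ 1, m = ↑(red (factorAt x i n)) }

/-!
A binary word reduces to the alternating word with the same first letter and one letter more
than its number of alternations, so the reduced factor of length `8n+1` at `i` is determined by
`f i` and the number of alternations of `f` on `[i, i+8n]`. Since `f (4k+1) = 0`, `f (4k+2) = k mod 2`,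
`f (4k+3) = 1` and `f (4k) = f k`, the number of alternations up to position `j` is `2k`, `2k + k mod 2`,
`2k+1` for `j = 4k+1, 4k+2, 4k+3`, and `2k - f k` for `j = 4k > 0`. So a window not starting at a
multiple of 4 has exactly `4n` alternations, and one starting at `4p` has
`4n + [f (p+2n) = 0] - [f p = 0]`. The reduced factors are therefore the alternating words starting
with `0` of lengths `4n, 4n+1` and starting with `1` of lengths `4n+1, 4n+2`; the extreme ones occur at
`p = 2^v (2c+1)` with `2^v ‖ n`, where `f p = c mod 2` and `f (p+2n) ≠ f p`.
-/

open Finset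

lemma factorAt_succ {α : Type*} (x : ℕ → α) (i k : ℕ) :
    factorAt x i (k + 1) = x i :: factorAt x (i + 1) k := by
  simp only [factorAt, List.range_succ_eq_map, List.map_cons, List.map_map, add_zero,
    Function.comp_def, add_assoc, add_comm 1]

lemma alt_cons_cons (a b : Bool) (l : List Bool) :
    alt (a :: b :: l) = (a != b).toNat + alt (b :: l) := by
  cases a <;> cases b <;> simp [alt] <;> omega

lemma red_cons_eq_iterate (a : Bool) (l : List Bool) :
    red (a :: l) = List.iterate not a (alt (a :: l) + 1) := by
  induction l generalizing a with
  | nil => rfl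
  | cons b l ih =>
    rw [alt_cons_cons]
    by_cases hab : a = b
    · subst hab
      rw [red, List.destutter_cons_cons, if_neg (not_not.2 rfl)]
      simpa [red, List.destutter_cons'] using ih a
    · obtain rfl : b = !a := by cases a <;> cases b <;> simp_all
      rw [red, List.destutter_cons_cons, if_pos hab]
      simpa [red, List.destutter_cons', add_comm 1] using ih !a

lemma alt_factorAt (x : ℕ → Bool) (i m : ℕ) :
    alt (factorAt x i (m + 1)) = ∑ t ∈ Ico i (i + m), (x t != x (t + 1)).toNat := by
  induction m generalizing i with
  | zero => simp [factorAt, alt]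
  | succ m ih =>
    rw [factorAt_succ, factorAt_succ, alt_cons_cons, ← factorAt_succ, ih,
      sum_eq_sum_Ico_succ_bot (a := i) (by omega), add_assoc, add_comm 1 m]

lemma red_factorAt (x : ℕ → Bool) (i m : ℕ) :
    red (factorAt x i (m + 1)) =
      List.iterate not (x i) (∑ t ∈ Ico i (i + m), (x t != x (t + 1)).toNat + 1) := by
  rw [← alt_factorAt, factorAt_succ, red_cons_eq_iterate]

lemma paperfold_two_mul (m : ℕ) : paperfold (2 * m) = paperfold m := by
  rcases m.eq_zero_or_pos with rfl | hm
  · rfl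
  have h : (2 * m).factorization 2 = m.factorization 2 + 1 := by
    rw [Nat.factorization_mul two_ne_zero hm.ne', Finsupp.add_apply,
      Nat.prime_two.factorization_self, add_comm]
  rw [paperfold, paperfold, h, pow_succ', mul_comm, ← Nat.div_div_eq_div_mul,
    Nat.mul_div_cancel _ two_pos]

lemma paperfold_two_pow_mul (v x : ℕ) : paperfold (2 ^ v * x) = paperfold x := by
  induction v with
  | zero => rw [pow_zero, one_mul]
  | succ v ih => rw [pow_succ', mul_assoc, paperfold_two_mul, ih]

lemma paperfold_two_mul_add_one (k : ℕ) : paperfold (2 * k + 1) = decide (k % 2 = 1) := by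
  rw [paperfold, Nat.factorization_eq_zero_of_not_dvd (by omega), pow_zero, Nat.div_one]
  exact decide_eq_decide.2 (by omega)

lemma paperfold_four_mul_add_one (k : ℕ) : paperfold (4 * k + 1) = false := by
  rw [show 4 * k + 1 = 2 * (2 * k) + 1 by ring, paperfold_two_mul_add_one]
  simp

lemma paperfold_four_mul_add_two (k : ℕ) : paperfold (4 * k + 2) = decide (k % 2 = 1) := by
  rw [show 4 * k + 2 = 2 * (2 * k + 1) by ring, paperfold_two_mul, paperfold_two_mul_add_one]

lemma paperfold_four_mul_add_three (k : ℕ) : paperfold (4 * k + 3) = true := by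
  rw [show 4 * k + 3 = 2 * (2 * k + 1) + 1 by ring, paperfold_two_mul_add_one]
  simp

lemma paperfold_four_mul (k : ℕ) : paperfold (4 * k) = paperfold k := by
  rw [show 4 * k = 2 * (2 * k) by ring, paperfold_two_mul, paperfold_two_mul]

lemma exists_paperfold_eq_and_add_eq_not {n : ℕ} (hn : n ≠ 0) (a : Bool) :
    ∃ p, 0 < p ∧ paperfold p = a ∧ paperfold (p + 2 * n) = !a := by
  obtain ⟨v, m, ⟨j, rfl⟩, rfl⟩ := Nat.exists_eq_two_pow_mul_odd hn
  refine ⟨2 ^ v * (2 * a.toNat + 1), by positivity, ?_, ?_⟩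
  · rw [paperfold_two_pow_mul, paperfold_two_mul_add_one]
    cases a <;> rfl
  · rw [show 2 ^ v * (2 * a.toNat + 1) + 2 * (2 ^ v * (2 * j + 1))
        = 2 ^ v * (2 * (a.toNat + 2 * j + 1) + 1) by ring,
      paperfold_two_pow_mul, paperfold_two_mul_add_one]
    cases a <;> simp
    omega

-- The term `t = 0` lies outside the sequence; it vanishes as `paperfold 0 = paperfold 1 = false`.
def paperfoldAltCount (j : ℕ) : ℕ :=
  ∑ t ∈ range j, (paperfold t != paperfold (t + 1)).toNat

lemma paperfoldAltCount_four_mul_add_one (k : ℕ) : paperfoldAltCount (4 * k + 1) = 2 * k := by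
  induction k with
  | zero => simp [paperfoldAltCount, paperfold]
  | succ k ih =>
    rw [paperfoldAltCount] at ih ⊢
    rw [show 4 * (k + 1) + 1 = 4 * k + 1 + 1 + 1 + 1 + 1 by ring]
    simp only [sum_range_succ, ih, add_assoc, Nat.reduceAdd]
    rw [show 4 * k + 5 = 4 * (k + 1) + 1 by ring, show 4 * k + 4 = 4 * (k + 1) by ring,
      paperfold_four_mul_add_one, paperfold_four_mul_add_one, paperfold_four_mul_add_two,
      paperfold_four_mul_add_three, paperfold_four_mul]
    rcases Nat.mod_two_eq_zero_or_one k with h | h <;> cases paperfold (k + 1) <;> simp [h, mul_add]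

lemma paperfoldAltCount_four_mul_add_two (k : ℕ) :
    paperfoldAltCount (4 * k + 2) = 2 * k + k % 2 := by
  rw [paperfoldAltCount, sum_range_succ, ← paperfoldAltCount,
    paperfoldAltCount_four_mul_add_one, paperfold_four_mul_add_one, paperfold_four_mul_add_two]
  rcases Nat.mod_two_eq_zero_or_one k with h | h <;> simp [h]

lemma paperfoldAltCount_four_mul_add_three (k : ℕ) :
    paperfoldAltCount (4 * k + 3) = 2 * k + 1 := by
  rw [paperfoldAltCount, sum_range_succ, ← paperfoldAltCount,
    paperfoldAltCount_four_mul_add_two, paperfold_four_mul_add_two, paperfold_four_mul_add_three]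
  rcases Nat.mod_two_eq_zero_or_one k with h | h <;> simp [h]

lemma paperfoldAltCount_four_mul_add_four (k : ℕ) :
    paperfoldAltCount (4 * k + 4) = 2 * k + 1 + (!paperfold (k + 1)).toNat := by
  rw [paperfoldAltCount, sum_range_succ, ← paperfoldAltCount,
    paperfoldAltCount_four_mul_add_three, paperfold_four_mul_add_three,
    show 4 * k + 3 + 1 = 4 * (k + 1) by ring, paperfold_four_mul]
  cases paperfold (k + 1) <;> rfl

lemma paperfoldAltCount_add_eight_mul_of_mod_four_ne_zero {i : ℕ} (hi : i % 4 ≠ 0) (n : ℕ) :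
    paperfoldAltCount (i + 8 * n) = paperfoldAltCount i + 4 * n := by
  obtain ⟨q, r, hr, rfl⟩ : ∃ q r, r < 3 ∧ i = 4 * q + r + 1 := ⟨i / 4, i % 4 - 1, by omega, by omega⟩
  have hq : 4 * q + r + 1 + 8 * n = 4 * (q + 2 * n) + r + 1 := by ring
  interval_cases r
  · simp only [hq, paperfoldAltCount_four_mul_add_one]
    ring
  · simp only [hq, paperfoldAltCount_four_mul_add_two]
    omega
  · simp only [hq, paperfoldAltCount_four_mul_add_three]
    ring

lemma paperfoldAltCount_four_mul_add_eight_mul {p : ℕ} (hp : 0 < p) (n : ℕ) :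
    paperfoldAltCount (4 * p + 8 * n) + (!paperfold p).toNat =
      paperfoldAltCount (4 * p) + 4 * n + (!paperfold (p + 2 * n)).toNat := by
  obtain ⟨k, rfl⟩ : ∃ k, p = k + 1 := ⟨p - 1, by omega⟩
  rw [show 4 * (k + 1) + 8 * n = 4 * (k + 2 * n) + 4 by ring, show 4 * (k + 1) = 4 * k + 4 by ring,
    paperfoldAltCount_four_mul_add_four, paperfoldAltCount_four_mul_add_four,
    show k + 2 * n + 1 = k + 1 + 2 * n by ring]
  ring

lemma paperfoldAltCount_add_sum_Ico (i m : ℕ) :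
    paperfoldAltCount i + ∑ t ∈ Ico i (i + m), (paperfold t != paperfold (t + 1)).toNat =
      paperfoldAltCount (i + m) :=
  sum_range_add_sum_Ico _ (Nat.le_add_right i m)

lemma red_factorAt_paperfold_of_mod_four_ne_zero {i : ℕ} (hi : i % 4 ≠ 0) (n : ℕ) :
    red (factorAt paperfold i (8 * n + 1)) = List.iterate not (paperfold i) (4 * n + 1) := by
  have hsum := paperfoldAltCount_add_sum_Ico i (8 * n)
  rw [paperfoldAltCount_add_eight_mul_of_mod_four_ne_zero hi] at hsum
  rw [red_factorAt, Nat.add_left_cancel hsum]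

lemma red_factorAt_paperfold_four_mul {p : ℕ} (hp : 0 < p) (n : ℕ) :
    red (factorAt paperfold (4 * p) (8 * n + 1)) = List.iterate not (paperfold p)
      (4 * n + (!paperfold (p + 2 * n)).toNat + 1 - (!paperfold p).toNat) := by
  have hsum := paperfoldAltCount_add_sum_Ico (4 * p) (8 * n)
  have hcount := paperfoldAltCount_four_mul_add_eight_mul hp n
  rw [red_factorAt, paperfold_four_mul]
  congr 1
  omega

lemma List.iterate_eq_iterate_iff {α : Type*} {f : α → α} {a b : α} {k l : ℕ} :
    List.iterate f a k = List.iterate f b l ↔ k = l ∧ (k = 0 ∨ a = b) := by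
  constructor
  · intro h
    have hkl : k = l := by simpa using congrArg List.length h
    subst hkl
    rcases k with _ | k
    · exact ⟨rfl, .inl rfl⟩
    · exact ⟨rfl, .inr (List.cons_eq_cons.1 h).1⟩
  · rintro ⟨rfl, rfl | rfl⟩ <;> rfl

def paperfoldReducedFactors (n : ℕ) : Set (List Bool) :=
  {List.iterate not false (4 * n), List.iterate not false (4 * n + 1),
    List.iterate not true (4 * n + 1), List.iterate not true (4 * n + 2)}

lemma ncard_paperfoldReducedFactors (n : ℕ) : (paperfoldReducedFactors n).ncard = 4 := by
  rw [paperfoldReducedFactors, Set.ncard_insert_of_notMem, Set.ncard_insert_of_notMem,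
    Set.ncard_pair] <;>
    simp only [Set.mem_insert_iff, Set.mem_singleton_iff, ne_eq, List.iterate_eq_iterate_iff,
      Bool.false_eq_true, or_false] <;> omega

lemma red_factorAt_paperfold_mem {i : ℕ} (hi : 0 < i) (n : ℕ) :
    red (factorAt paperfold i (8 * n + 1)) ∈ paperfoldReducedFactors n := by
  simp only [paperfoldReducedFactors, Set.mem_insert_iff, Set.mem_singleton_iff]
  by_cases h4 : i % 4 = 0
  · obtain ⟨p, rfl⟩ : ∃ p, i = 4 * p := ⟨i / 4, by omega⟩
    rw [red_factorAt_paperfold_four_mul (by omega)]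
    cases paperfold p <;> cases paperfold (p + 2 * n) <;> simp [List.iterate_eq_iterate_iff]
  · rw [red_factorAt_paperfold_of_mod_four_ne_zero h4]
    cases paperfold i <;> simp

lemma paperfoldReducedFactors_subset {n : ℕ} (hn : 0 < n) :
    paperfoldReducedFactors n ⊆ {u | ∃ i ≥ 1, u = red (factorAt paperfold i (8 * n + 1))} := by
  have hnotDvd (i : ℕ) (hi : i % 4 ≠ 0) : ∃ j ≥ 1, List.iterate not (paperfold i) (4 * n + 1) =
      red (factorAt paperfold j (8 * n + 1)) :=
    ⟨i, by omega, (red_factorAt_paperfold_of_mod_four_ne_zero hi n).symm⟩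
  have hdvd (a : Bool) : ∃ j ≥ 1, List.iterate not a (4 * n + 1 + a.toNat - (!a).toNat) =
      red (factorAt paperfold j (8 * n + 1)) := by
    obtain ⟨p, hp, hpa, hpna⟩ := exists_paperfold_eq_and_add_eq_not hn.ne' a
    refine ⟨4 * p, by omega, ?_⟩
    rw [red_factorAt_paperfold_four_mul hp, hpa, hpna, Bool.not_not, add_right_comm]
  rintro u (rfl | rfl | rfl | rfl)
  · simpa using hdvd false
  · simpa [paperfold_four_mul_add_one 0] using hnotDvd 1 (by decide)
  · simpa [paperfold_four_mul_add_three 0] using hnotDvd 3 (by decide)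
  · simpa using hdvd true

theorem stmt14 (n : ℕ) (hn : 1 ≤ n) :
    redFactorComplexity paperfold (8 * n + 1) = 4 := by
  rw [redFactorComplexity, ← ncard_paperfoldReducedFactors n]
  congr 1
  exact (paperfoldReducedFactors_subset hn).antisymm'
    fun _ ⟨_, hi, hu⟩ => hu ▸ red_factorAt_paperfold_mem hi n
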